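/- If G is a finite nontrivial two-sided brace, then Soc(G) ≠ {1}. -/
import Mathlib


class LeftBrace (G : Type*) [AddCommGroup G] [Group G] : Prop where
  left_compat : ∀ a b c : G, a * (b + c) + a = a * b + a * c

class RightBrace (G : Type*) [AddCommGroup G] [Group G] : Prop where
  right_compat : ∀ a b c : G, (a + b) * c + c = a * c + b * c

section BraceAux

variable {G : Type*} [AddCommGroup G] [Group G] [LeftBrace G] [RightBrace G]

/-- the associated radical-ring multiplication -/
def bstar (a b : G) : G := a * b - a - b

lemma brace_one_eq_zero : (1 : G) = 0 := by
  have h := LeftBrace.left_compat (1 : G) 0 0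
  simpa using h

lemma brace_mul_zero (a : G) : a * 0 = a := by
  rw [← brace_one_eq_zero]; exact mul_one a

lemma brace_zero_mul (a : G) : 0 * a = a := by
  rw [← brace_one_eq_zero]; exact one_mul a

lemma brace_mul_add (a b c : G) : a * (b + c) = a * b + a * c - a :=
  eq_sub_of_add_eq (LeftBrace.left_compat a b c)

lemma brace_add_mul (a b c : G) : (a + b) * c = a * c + b * c - c :=
  eq_sub_of_add_eq (RightBrace.right_compat a b c)

lemma brace_neg_mul (a c : G) : (-a) * c = c + c - a * c := by
  have h := brace_add_mul a (-a) c
  rw [add_neg_cancel, brace_zero_mul] at h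
  have := h.symm
  rw [sub_eq_iff_eq_add] at this
  -- this : a * c + -a * c = c + c
  have h2 : (-a) * c = (a * c + (-a) * c) - a * c := by abel
  rw [h2, this]

lemma brace_sub_mul (a b c : G) : (a - b) * c = a * c - b * c + c := by
  rw [sub_eq_add_neg, brace_add_mul, brace_neg_mul]
  abel

lemma bstar_add (a b c : G) : bstar a (b + c) = bstar a b + bstar a c := by
  unfold bstar
  rw [brace_mul_add]
  abel

lemma add_bstar (a b c : G) : bstar (a + b) c = bstar a c + bstar b c := by
  unfold bstar
  rw [brace_add_mul]
  abel

/-- left multiplication as an additive hom -/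
def bstarL (a : G) : G →+ G := AddMonoidHom.mk' (fun b => bstar a b) (bstar_add a)

/-- right multiplication as an additive hom -/
def bstarR (c : G) : G →+ G := AddMonoidHom.mk' (fun a => bstar a c) (fun a b => add_bstar a b c)

lemma bstar_zero (a : G) : bstar a 0 = 0 := (bstarL a).map_zero

lemma zero_bstar (a : G) : bstar 0 a = 0 := (bstarR a).map_zero

lemma bstar_sub (a b c : G) : bstar a (b - c) = bstar a b - bstar a c :=
  (bstarL a).map_sub b c

lemma sub_bstar (a b c : G) : bstar (a - b) c = bstar a c - bstar b c :=
  (bstarR c).map_sub a b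

lemma neg_bstar (a c : G) : bstar (-a) c = -(bstar a c) :=
  (bstarR c).map_neg a

lemma bstar_assoc (a b c : G) : bstar (bstar a b) c = bstar a (bstar b c) := by
  have e1 : (a * b - a - b) * c = (a * b) * c - a * c - b * c + c + c := by
    rw [brace_sub_mul, brace_sub_mul]; abel
  have e2 : bstar a (bstar b c) = bstar a (b * c) - bstar a b - bstar a c := by
    rw [show bstar b c = b * c - b - c from rfl, show b * c - b - c = (b * c - b) - c from rfl,
      bstar_sub, bstar_sub]
  rw [e2]
  unfold bstar
  rw [e1, mul_assoc]
  abel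

/-- Key quasi-inverse identity: from `u = c + u⋆t` we get `u = c + c⋆s`
with `s = (-t)⁻¹` (group inverse). -/
lemma bstar_solve (u c t : G) (h : u = c + bstar u t) :
    u = c + bstar c ((-t)⁻¹) := by
  set s := (-t)⁻¹ with hsdef
  have hinv : (-t) * s = 1 := mul_inv_cancel (-t)
  have hts : bstar t s = s - t := by
    have h1 : bstar (-t) s = -(bstar t s) := neg_bstar t s
    have h2 : bstar (-t) s = t - s := by
      unfold bstar
      rw [hinv, brace_one_eq_zero]
      abel
    have := h1.symm.trans h2
    have h3 : bstar t s = -(t - s) := by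
      rw [← this]; abel
    rw [h3]; abel
  have hkey : s - t - bstar t s = 0 := by rw [hts]; abel
  have h0 : bstar u (s - t - bstar t s) = 0 := by rw [hkey, bstar_zero]
  rw [bstar_sub, bstar_sub, ← bstar_assoc] at h0
  -- h0 : bstar u s - bstar u t - bstar (bstar u t) s = 0
  have h4 : u - c = bstar u t := sub_eq_iff_eq_add.mpr (h.trans (add_comm _ _))
  rw [← h4] at h0
  rw [sub_bstar] at h0
  -- h0 : bstar u s - (u - c) - (bstar u s - bstar c s) = 0
  have h5 : u = c + bstar c s := by
    have := h0
    have h6 : bstar u s - (u - c) - (bstar u s - bstar c s) = c + bstar c s - u := by abel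
    rw [h6] at this
    have := sub_eq_zero.mp this
    exact this.symm
  exact h5

/-- Nakayama-style induction: if finitely many elements each lie in the span of
right multiples of the family, they are all zero. -/
lemma brace_nakayama : ∀ (k : ℕ) (x : Fin k → G),
    (∀ i, ∃ r : Fin k → G, x i = ∑ j, bstar (x j) (r j)) → ∀ i, x i = 0 := by
  intro k
  induction k with
  | zero => intro x _ i; exact i.elim0
  | succ k IH =>
    intro x hx
    obtain ⟨r, hr⟩ := hx (Fin.last k)
    set u := x (Fin.last k) with hudef
    set c := ∑ j : Fin k, bstar (x j.castSucc) (r j.castSucc) with hcdef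
    have hu : u = c + bstar u (r (Fin.last k)) := by
      conv_lhs => rw [hr]
      rw [Fin.sum_univ_castSucc, ← hcdef, ← hudef]
    set t := r (Fin.last k) with htdef
    set s := (-t)⁻¹ with hsdef
    have hu2 : u = c + bstar c s := bstar_solve u c t hu
    set y : Fin k → G := fun j => x j.castSucc with hydef
    have hcw : ∀ v : G, bstar c v = ∑ j : Fin k, bstar (y j) (bstar (r j.castSucc) v) := by
      intro v
      rw [hcdef]
      rw [show bstar (∑ j : Fin k, bstar (x j.castSucc) (r j.castSucc)) v
          = (bstarR v) (∑ j : Fin k, bstar (x j.castSucc) (r j.castSucc)) from rfl]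
      rw [map_sum]
      refine Finset.sum_congr rfl ?_
      intro j _
      show bstar (bstar (x j.castSucc) (r j.castSucc)) v = _
      rw [bstar_assoc]
    have hy : ∀ i, ∃ r'' : Fin k → G, y i = ∑ j, bstar (y j) (r'' j) := by
      intro i
      obtain ⟨p, hp⟩ := hx i.castSucc
      set w := p (Fin.last k) with hwdef
      refine ⟨fun j => p j.castSucc + bstar (r j.castSucc) w
        + bstar (r j.castSucc) (bstar s w), ?_⟩
      have huw : bstar u w = bstar c w + bstar c (bstar s w) := by
        rw [hu2, add_bstar, bstar_assoc]
      have step1 : y i = ∑ j : Fin k, bstar (y j) (p j.castSucc) + bstar u w := by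
        rw [hydef]
        simpa [Fin.sum_univ_castSucc] using hp
      rw [step1, huw, hcw w, hcw (bstar s w)]
      rw [← Finset.sum_add_distrib, ← Finset.sum_add_distrib]
      refine Finset.sum_congr rfl ?_
      intro j _
      rw [bstar_add, bstar_add]
      abel
    have hy0 : ∀ j, y j = 0 := IH y hy
    have hc0 : c = 0 := by
      rw [hcdef]
      refine Finset.sum_eq_zero ?_
      intro j _
      have : x j.castSucc = 0 := hy0 j
      rw [this, zero_bstar]
    have hu0 : u = 0 := by rw [hu2, hc0, zero_bstar, add_zero]
    intro i
    refine Fin.lastCases ?_ ?_ i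
    · exact hu0
    · intro j; exact hy0 j

/-- The chain of right powers. -/
def bpow : ℕ → AddSubgroup G
  | 0 => ⊤
  | n + 1 => AddSubgroup.closure {z : G | ∃ a ∈ bpow n, ∃ b : G, z = bstar a b}

lemma bpow_antitone : Antitone (bpow (G := G)) := by
  refine antitone_nat_of_succ_le ?_
  intro n
  induction n with
  | zero => exact le_top
  | succ n ih =>
    show bpow (n + 2) ≤ bpow (n + 1)
    refine AddSubgroup.closure_le _ |>.mpr ?_
    rintro z ⟨a, ha, b, rfl⟩
    exact AddSubgroup.subset_closure ⟨a, ih ha, b, rfl⟩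

lemma closure_to_sum {k : ℕ} (e : Fin k → G) (Sset : Set G)
    (hS : ∀ z ∈ Sset, ∃ j b, z = bstar (e j) b) {x : G}
    (hx : x ∈ AddSubgroup.closure Sset) :
    ∃ r : Fin k → G, x = ∑ j, bstar (e j) (r j) := by
  let ψ : (Fin k → G) →+ G := AddMonoidHom.mk' (fun r => ∑ j, bstar (e j) (r j)) (by
    intro r r'
    rw [← Finset.sum_add_distrib]
    refine Finset.sum_congr rfl ?_
    intro j _
    exact bstar_add _ _ _)
  have hle : AddSubgroup.closure Sset ≤ ψ.range := by
    refine AddSubgroup.closure_le _ |>.mpr ?_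
    intro z hz
    obtain ⟨j, b, rfl⟩ := hS z hz
    refine ⟨Pi.single j b, ?_⟩
    have happ : ψ (Pi.single j b) = ∑ j', bstar (e j') ((Pi.single j b : Fin k → G) j') := rfl
    rw [happ]
    rw [Finset.sum_eq_single j (fun j' _ hj' => by rw [Pi.single_eq_of_ne hj', bstar_zero])
      (fun h => absurd (Finset.mem_univ j) h)]
    rw [Pi.single_eq_same]
  obtain ⟨r, hr⟩ := hle hx
  exact ⟨r, hr.symm⟩

end BraceAux

/-- If `G` is a finite non-trivial two-sided brace, then `Soc(G) ≠ {1}`, i.e. there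
is an element `a ≠ 1` with `ab = a + b` for all `b ∈ G`. -/
theorem socle_nontrivial_of_finite_twoSidedBrace (G : Type*) [AddCommGroup G] [Group G]
    [LeftBrace G] [RightBrace G] [Finite G] [Nontrivial G] :
    ∃ a : G, a ≠ 1 ∧ ∀ b : G, a * b = a + b := by
  classical
  -- the chain stabilizes
  have hfin : Finite (AddSubgroup G) :=
    Finite.of_injective (fun H : AddSubgroup G => (H : Set G)) SetLike.coe_injective
  obtain ⟨m, n, hmn, heq⟩ := Finite.exists_ne_map_eq_of_infinite (bpow (G := G))
  -- wlog m < n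
  have hstab : ∃ m : ℕ, bpow (G := G) m = bpow (G := G) (m + 1) := by
    rcases lt_or_gt_of_ne hmn with h | h
    · exact ⟨m, le_antisymm (heq ▸ bpow_antitone (by omega : m + 1 ≤ n))
        (bpow_antitone (by omega : m ≤ m + 1))⟩
    · exact ⟨n, le_antisymm (heq ▸ bpow_antitone (by omega : n + 1 ≤ m))
        (bpow_antitone (by omega : n ≤ n + 1))⟩
  obtain ⟨m, hm⟩ := hstab
  -- Nakayama: the stable subgroup is trivial
  have hbot : bpow (G := G) m = ⊥ := by
    set I := bpow (G := G) m with hI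
    have hIfin : Finite I := Subtype.finite
    obtain ⟨k, ⟨eI⟩⟩ := Finite.exists_equiv_fin I
    set x : Fin k → G := fun j => ((eI.symm j : I) : G) with hxdef
    have hmemx : ∀ j, x j ∈ I := fun j => (eI.symm j).2
    have hsurj : ∀ a ∈ I, ∃ j, x j = a := by
      intro a ha
      exact ⟨eI ⟨a, ha⟩, by simp [hxdef]⟩
    have hx : ∀ i, ∃ r : Fin k → G, x i = ∑ j, bstar (x j) (r j) := by
      intro i
      have hmem : x i ∈ AddSubgroup.closure {z : G | ∃ a ∈ I, ∃ b : G, z = bstar a b} := by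
        have : x i ∈ bpow (G := G) (m + 1) := hm ▸ hmemx i
        exact this
      refine closure_to_sum x _ ?_ hmem
      rintro z ⟨a, ha, b, rfl⟩
      obtain ⟨j, hj⟩ := hsurj a ha
      exact ⟨j, b, by rw [hj]⟩
    have hzero := brace_nakayama k x hx
    rw [eq_bot_iff]
    intro a ha
    obtain ⟨j, hj⟩ := hsurj a ha
    simpa [← hj] using hzero j
  -- minimal n with bpow n = ⊥
  have hex : ∃ n, bpow (G := G) n = ⊥ := ⟨m, hbot⟩
  have hn : bpow (G := G) (Nat.find hex) = ⊥ := Nat.find_spec hex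
  have hn0 : Nat.find hex ≠ 0 := by
    intro h
    have htop : (⊤ : AddSubgroup G) = ⊥ := by
      have := hn; rw [h] at this; exact this
    obtain ⟨a, ha⟩ := exists_ne (0 : G)
    exact ha (by simpa using (htop ▸ AddSubgroup.mem_top a : a ∈ (⊥ : AddSubgroup G)))
  obtain ⟨n', hsucc⟩ : ∃ n', Nat.find hex = n' + 1 := ⟨Nat.find hex - 1, by omega⟩
  have hnbot : bpow (G := G) (n' + 1) = ⊥ := hsucc ▸ hn
  have hn' : bpow (G := G) n' ≠ ⊥ := Nat.find_min hex (by omega)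
  obtain ⟨a, ha, ha0⟩ : ∃ a ∈ bpow (G := G) n', a ≠ 0 := by
    by_contra h
    push_neg at h
    exact hn' (eq_bot_iff.mpr fun a ha => by simpa using h a ha)
  refine ⟨a, ?_, ?_⟩
  · rw [brace_one_eq_zero]; exact ha0
  · intro b
    have hz : bstar a b ∈ bpow (G := G) (n' + 1) :=
      AddSubgroup.subset_closure ⟨a, ha, b, rfl⟩
    rw [hnbot] at hz
    have : bstar a b = 0 := hz
    have : a * b - a - b = 0 := this
    have := sub_eq_zero.mp (by rw [show a * b - a - b = a * b - (a + b) from by abel] at this; exact this)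
    exact this
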